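/- Let B be the 5-element band presented by generators a, b with relations a² = a, b² = b, aba = a, bab = b, together with an identity 1. Then the integral semigroup algebra ℤB is isomorphic to ℤQ/(αβ), where Q is the quiver with two vertices 0̂, 1̂ and arrows α: 1̂ → 0̂ and β: 0̂ → 1̂, and (αβ) is the two-sided ideal generated by the path αβ (the loop at 1̂ of length 2). -/

import Mathlib

/-! A concrete model of the path algebra of a quiver `V` over `k`, realized inside the
matrix algebra over the monoid algebra of the free monoid on the arrows: a path
`p : s → ⋯ → t` corresponds to the matrix whose `(s,t)` entry is the word of arrows of
`p` and whose other entries vanish.  Matrix multiplication implements concatenation of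
composable paths and kills non-composable products, so the span of these elements is a
subalgebra with the paths as a `k`-basis: the path algebra `kQ`. -/

/-- The arrows of a quiver, bundled with their endpoints. -/
abbrev QArrow (V : Type*) [Quiver V] := Σ i j : V, i ⟶ j

/-- `IsPath s t l` says that the list of arrows `l` is a directed path from `s` to `t`. -/
def IsPath {V : Type*} [Quiver V] : V → V → List (QArrow V) → Prop
  | s, t, [] => s = t
  | s, t, e :: l => e.1 = s ∧ IsPath e.2.1 t l

theorem IsPath.append {V : Type*} [Quiver V] {s t u : V} {l m : List (QArrow V)}
    (h1 : IsPath s t l) (h2 : IsPath t u m) : IsPath s u (l ++ m) := by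
  induction l generalizing s with
  | nil => cases h1; exact h2
  | cons e l ih => exact ⟨h1.1, ih h1.2⟩

/-- The element of the ambient matrix algebra corresponding to the path from `s` to `t`
with list of arrows `l`. -/
noncomputable def pathElt (k : Type*) [CommRing k] {V : Type*} [Quiver V] [DecidableEq V]
    (s t : V) (l : List (QArrow V)) :
    Matrix V V (MonoidAlgebra k (FreeMonoid (QArrow V))) :=
  Matrix.single s t (MonoidAlgebra.single (FreeMonoid.ofList l) 1)

theorem pathElt_mul (k : Type*) [CommRing k] {V : Type*} [Quiver V] [Fintype V]
    [DecidableEq V] (s t s' t' : V) (l l' : List (QArrow V)) :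
    pathElt k s t l * pathElt k s' t' l' =
      if t = s' then pathElt k s t' (l ++ l') else 0 := by
  unfold pathElt
  split
  · subst ‹t = s'›
    rw [Matrix.single_mul_single_same, MonoidAlgebra.single_mul_single, one_mul]
    rfl
  · exact Matrix.single_mul_single_of_ne (MonoidAlgebra.single (FreeMonoid.ofList l) 1) s _ _
      ‹t ≠ s'› (MonoidAlgebra.single (FreeMonoid.ofList l') 1)

theorem one_eq_sum_pathElt (k : Type*) [CommRing k] (V : Type*) [Quiver V] [Fintype V]
    [DecidableEq V] :
    (1 : Matrix V V (MonoidAlgebra k (FreeMonoid (QArrow V)))) = ∑ v : V, pathElt k v v [] := by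
  ext i j
  by_cases h : i = j
  · subst h
    simp [pathElt, Matrix.sum_apply, Matrix.single, Matrix.of_apply, Matrix.one_apply,
      MonoidAlgebra.one_def, Finset.sum_ite_eq]
  · have : ∀ x : V, (if x = i ∧ x = j then (MonoidAlgebra.single 1 1 :
        MonoidAlgebra k (FreeMonoid (QArrow V))) else 0) = 0 := by
      intro x
      rw [if_neg]
      rintro ⟨rfl, rfl⟩; exact h rfl
    simp [pathElt, Matrix.sum_apply, Matrix.single, Matrix.of_apply, Matrix.one_apply, h,
      MonoidAlgebra.one_def, this]

/-- The path algebra `kQ` of the quiver `V` over `k`, as a subalgebra of the ambient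
matrix algebra: the `k`-span of the path elements. -/
noncomputable def PathAlg (k : Type*) [CommRing k] (V : Type*) [Quiver V] [Fintype V]
    [DecidableEq V] : Subalgebra k (Matrix V V (MonoidAlgebra k (FreeMonoid (QArrow V)))) :=
  Submodule.toSubalgebra
    (Submodule.span k {m : Matrix V V (MonoidAlgebra k (FreeMonoid (QArrow V))) |
      ∃ s t l, IsPath s t l ∧ m = pathElt k s t l})
    (by
      rw [one_eq_sum_pathElt]
      exact Submodule.sum_mem _ fun v _ => Submodule.subset_span ⟨v, v, [], rfl, rfl⟩)
    (by
      intro x y hx hy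
      have hle : Submodule.span k {m : Matrix V V (MonoidAlgebra k (FreeMonoid (QArrow V))) |
          ∃ s t l, IsPath s t l ∧ m = pathElt k s t l} *
          Submodule.span k {m : Matrix V V (MonoidAlgebra k (FreeMonoid (QArrow V))) |
          ∃ s t l, IsPath s t l ∧ m = pathElt k s t l} ≤
          Submodule.span k {m : Matrix V V (MonoidAlgebra k (FreeMonoid (QArrow V))) |
          ∃ s t l, IsPath s t l ∧ m = pathElt k s t l} := by
        rw [Submodule.span_mul_span, Submodule.span_le]
        rintro z ⟨p, hp, q, hq, rfl⟩
        obtain ⟨s, t, l, hl, rfl⟩ := hp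
        obtain ⟨s', t', l', hl', rfl⟩ := hq
        show pathElt k s t l * pathElt k s' t' l' ∈ _
        rw [pathElt_mul]
        split
        · rename_i h
          subst h
          exact Submodule.subset_span ⟨s, t', l ++ l', hl.append hl', rfl⟩
        · exact Submodule.zero_mem _
      exact hle (Submodule.mul_mem_mul hx hy))

/-- The arrow ideal `J_k` of the path algebra: the two-sided ideal generated
(equivalently, `k`-spanned) by the paths of positive length. -/
noncomputable def arrowIdeal (k : Type*) [CommRing k] (V : Type*) [Quiver V] [Fintype V]
    [DecidableEq V] : TwoSidedIdeal (PathAlg k V) :=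
  TwoSidedIdeal.span {p : PathAlg k V | ∃ s t l, l ≠ [] ∧ IsPath s t l ∧
    (p : Matrix V V (MonoidAlgebra k (FreeMonoid (QArrow V)))) = pathElt k s t l}

/-- The `5`-element band `B = {1, a, b, ab, ba}` presented by
`⟨a, b ∣ a² = a, b² = b, aba = a, bab = b⟩` together with an identity. -/
inductive B5 : Type
  | one | a | b | ab | ba
deriving DecidableEq

instance : Fintype B5 :=
  ⟨{B5.one, B5.a, B5.b, B5.ab, B5.ba}, fun x => by cases x <;> simp⟩

/-- Multiplication table of `B5`, determined by the relations
`a² = a`, `b² = b`, `aba = a`, `bab = b`. -/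
def B5.mul : B5 → B5 → B5
  | B5.one, y => y
  | x, B5.one => x
  | B5.a, B5.a => B5.a
  | B5.a, B5.b => B5.ab
  | B5.a, B5.ab => B5.ab
  | B5.a, B5.ba => B5.a
  | B5.b, B5.a => B5.ba
  | B5.b, B5.b => B5.b
  | B5.b, B5.ab => B5.b
  | B5.b, B5.ba => B5.ba
  | B5.ab, B5.a => B5.a
  | B5.ab, B5.b => B5.ab
  | B5.ab, B5.ab => B5.ab
  | B5.ab, B5.ba => B5.a
  | B5.ba, B5.a => B5.ba
  | B5.ba, B5.b => B5.b
  | B5.ba, B5.ab => B5.b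
  | B5.ba, B5.ba => B5.ba

instance : Monoid B5 where
  mul := B5.mul
  one := B5.one
  mul_assoc := by decide
  one_mul := by decide
  mul_one := by decide

/-- The quiver with two vertices `0̂ = false`, `1̂ = true` and a single arrow in each
direction: `α : 1̂ → 0̂` and `β : 0̂ → 1̂`. -/
instance quiverBool : Quiver Bool := ⟨fun i j => PLift (i ≠ j)⟩

/-- The arrow `α : 1̂ → 0̂`. -/
def arrα : QArrow Bool := ⟨true, false, PLift.up (by simp)⟩

/-- The arrow `β : 0̂ → 1̂`. -/
def arrβ : QArrow Bool := ⟨false, true, PLift.up (by simp)⟩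

/-- `B5` is a band and satisfies the defining relations of the presentation. -/
theorem B5_band_relations :
    (∀ x : B5, x * x = x) ∧ B5.a * B5.b = B5.ab ∧ B5.b * B5.a = B5.ba ∧
      B5.a * B5.b * B5.a = B5.a ∧ B5.b * B5.a * B5.b = B5.b ∧
      (∀ x : B5, x = B5.one ∨ x = B5.a ∨ x = B5.b ∨ x = B5.a * B5.b ∨ x = B5.b * B5.a) := by
  decide

/-! The isomorphism `ℤQ/(αβ) → ℤB` sends the vertices to the complete pair of orthogonal
idempotents `a`, `1 - a` and the arrows `α`, `β` to `ab - a`, `ba - a`; it kills `αβ` because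
`(ab - a)(ba - a) = 0`. In the other direction `a ↦ ε`, `b ↦ (ε + β)(ε + α)`, where `ε` is the
vertex carrying the loop `αβ`, satisfy the defining relations of `B` modulo `αβ`. The two ring maps
are mutually inverse because they are so on generators: `a`, `b` for `ℤB`, and the vertices and
arrows for `ℤQ`. -/

theorem IsPath.singleton {V : Type*} [Quiver V] (e : QArrow V) : IsPath e.1 e.2.1 [e] :=
  ⟨rfl, rfl⟩

theorem IsPath.mul_prod_mul {V : Type*} [Quiver V] {A : Type*} [Ring A] {p : V → A}
    {g : QArrow V → A} {s t : V} {l : List (QArrow V)} (h : IsPath s t l)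
    (hp : ∀ v, IsIdempotentElem (p v)) (hg : ∀ e, p e.1 * g e * p e.2.1 = g e) :
    p s * (l.map g).prod * p t = (l.map g).prod * p t := by
  cases l with
  | nil => cases h; simp [(hp s).eq]
  | cons e l =>
    obtain ⟨rfl, -⟩ := h
    have hleft : p e.1 * g e = g e := by
      rw [← hg e, ← mul_assoc, ← mul_assoc, (hp _).eq]
    rw [List.map_cons, List.prod_cons, ← mul_assoc, hleft]

theorem TwoSidedIdeal.ringCon_span_le_ker {R S : Type*} [Ring R] [Ring S] {s : Set R}
    {f : R →+* S} (h : ∀ x ∈ s, f x = 0) : (span s).ringCon ≤ RingCon.ker f :=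
  ringCon_le_iff.mp <| span_le.mpr fun x hx => (mem_ker f).mpr (h x hx)

namespace B5

variable {M : Type*} [Monoid M]

def lift (A B : M) (hA : A * A = A) (hB : B * B = B) (hABA : A * B * A = A)
    (hBAB : B * A * B = B) : B5 →* M where
  toFun
    | one => 1
    | a => A
    | b => B
    | ab => A * B
    | ba => B * A
  map_one' := rfl
  map_mul' x y := by
    have hA' (z : M) : A * (A * z) = A * z := by rw [← mul_assoc, hA]
    have hB' (z : M) : B * (B * z) = B * z := by rw [← mul_assoc, hB]
    rw [mul_assoc] at hABA hBAB
    cases x <;> cases y <;>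
      simp only [mul_one, one_mul, mul_assoc, hA, hB, hABA, hBAB, hA', hB'] <;> rfl

theorem monoidHom_ext {f g : B5 →* M} (ha : f a = g a) (hb : f b = g b) : f = g := by
  ext x
  obtain rfl | rfl | rfl | rfl | rfl := B5_band_relations.2.2.2.2.2 x
  · exact (map_one f).trans (map_one g).symm
  · exact ha
  · exact hb
  · rw [map_mul, map_mul, ha, hb]
  · rw [map_mul, map_mul, ha, hb]

theorem mul_eq (x y : B5) : x * y = B5.mul x y := rfl

end B5

theorem eq_arrα_or_eq_arrβ : ∀ e : QArrow Bool, e = arrα ∨ e = arrβ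
  | ⟨true, false, _⟩ => Or.inl rfl
  | ⟨false, true, _⟩ => Or.inr rfl
  | ⟨true, true, ⟨h⟩⟩ => absurd rfl h
  | ⟨false, false, ⟨h⟩⟩ => absurd rfl h

noncomputable section

namespace PathAlg

variable {k : Type*} [CommRing k] {V : Type*} [Quiver V] [Fintype V] [DecidableEq V]

theorem toSubmodule_eq : Subalgebra.toSubmodule (PathAlg k V) =
    Submodule.span k {m | ∃ s t l, IsPath s t l ∧ m = pathElt k s t l} :=
  rfl

variable (k) in
def path {s t : V} {l : List (QArrow V)} (h : IsPath s t l) : PathAlg k V :=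
  ⟨pathElt k s t l, Submodule.subset_span ⟨s, t, l, h, rfl⟩⟩

variable (k) in
def vertex (v : V) : PathAlg k V := path k (show IsPath v v [] from rfl)

variable (k) in
def arrow (e : QArrow V) : PathAlg k V := path k (IsPath.singleton e)

theorem path_mul_path {s t u : V} {l m : List (QArrow V)} (h : IsPath s t l)
    (h' : IsPath t u m) : path k h * path k h' = path k (h.append h') :=
  Subtype.ext <| (pathElt_mul k s t t u l m).trans (if_pos rfl)

theorem path_mul_path_of_ne {s t s' t' : V} {l m : List (QArrow V)} (h : IsPath s t l)
    (h' : IsPath s' t' m) (hne : t ≠ s') : path k h * path k h' = 0 :=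
  Subtype.ext <| (pathElt_mul k s t s' t' l m).trans (if_neg hne)

theorem path_nil {s t : V} (h : IsPath s t []) : path k h = vertex k s := by
  cases h; rfl

theorem path_cons {s t : V} {e : QArrow V} {l : List (QArrow V)} (h : IsPath s t (e :: l)) :
    path k h = arrow k e * path k h.2 := by
  obtain ⟨rfl, h'⟩ := h
  rw [arrow, path_mul_path]

theorem vertex_mul_path {s t : V} {l : List (QArrow V)} (h : IsPath s t l) :
    vertex k s * path k h = path k h :=
  path_mul_path _ h

theorem path_mul_vertex {s t : V} {l : List (QArrow V)} (h : IsPath s t l) :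
    path k h * vertex k t = path k h := by
  rw [vertex, path_mul_path]
  exact Subtype.ext (by simp [path])

theorem vertex_mul_self (v : V) : vertex k v * vertex k v = vertex k v :=
  vertex_mul_path _

theorem one_eq_sum_vertex : (1 : PathAlg k V) = ∑ v, vertex k v :=
  Subtype.ext <| by simpa [vertex, path] using one_eq_sum_pathElt k V

theorem algHom_ext {A : Type*} [Semiring A] [Algebra k A] {f g : PathAlg k V →ₐ[k] A}
    (hv : ∀ v, f (vertex k v) = g (vertex k v)) (ha : ∀ e, f (arrow k e) = g (arrow k e)) :
    f = g := by
  have hpath : ∀ (l : List (QArrow V)) {s t : V} (h : IsPath s t l),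
      f (path k h) = g (path k h) := by
    intro l
    induction l with
    | nil => intro s t h; rw [path_nil, hv]
    | cons e l ih => intro s t h; rw [path_cons, map_mul, map_mul, ha, ih]
  ext ⟨x, hx⟩
  change x ∈ Submodule.span k _ at hx
  induction hx using Submodule.span_induction with
  | mem x hx => obtain ⟨s, t, l, h, rfl⟩ := hx; exact hpath l h
  | zero => exact (map_zero f).trans (map_zero g).symm
  | add x y _ _ hx hy => exact (map_add f ⟨x, _⟩ ⟨y, _⟩).trans <|
      (congrArg₂ (· + ·) hx hy).trans (map_add g ⟨x, _⟩ ⟨y, _⟩).symm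
  | smul c x _ hx => exact (map_smul f c ⟨x, _⟩).trans <|
      (congrArg (c • ·) hx).trans (map_smul g c ⟨x, _⟩).symm

section Lift

variable {A : Type*} [Ring A] [Algebra k A] {p : V → A} {g : QArrow V → A}

variable (p g) in
/-- Defined on the whole ambient matrix algebra, where it is linear; it is multiplicative only on
`PathAlg k V`. -/
def sandwich : Matrix V V (MonoidAlgebra k (FreeMonoid (QArrow V))) →ₗ[k] A where
  toFun m := ∑ s, ∑ t, p s * MonoidAlgebra.lift k A _ (FreeMonoid.lift g) (m s t) * p t
  map_add' m m' := by
    simp only [Matrix.add_apply, map_add, mul_add, add_mul, Finset.sum_add_distrib]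
  map_smul' c m := by
    simp only [Matrix.smul_apply, map_smul, mul_smul_comm, smul_mul_assoc, Finset.smul_sum,
      RingHom.id_apply]

theorem sandwich_pathElt (s t : V) (l : List (QArrow V)) :
    sandwich p g (pathElt k s t l) = p s * (l.map g).prod * p t := by
  simp [sandwich, pathElt, Matrix.single_apply, apply_ite, ite_mul, ite_and, Finset.sum_ite_eq]

theorem sandwich_pathElt_mul (hp : CompleteOrthogonalIdempotents p)
    (hg : ∀ e, p e.1 * g e * p e.2.1 = g e) {s t s' t' : V} {l l' : List (QArrow V)}
    (h' : IsPath s' t' l') :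
    sandwich p g (pathElt k s t l * pathElt k s' t' l') =
      sandwich p g (pathElt k s t l) * sandwich p g (pathElt k s' t' l') := by
  rw [pathElt_mul, sandwich_pathElt, sandwich_pathElt]
  split_ifs with hts
  · subst hts
    rw [sandwich_pathElt, List.map_append, List.prod_append]
    calc p s * ((l.map g).prod * (l'.map g).prod) * p t'
        = p s * (l.map g).prod * ((l'.map g).prod * p t') := by simp only [mul_assoc]
      _ = p s * (l.map g).prod * (p t * p t * (l'.map g).prod * p t') := by
        rw [(hp.idem t).eq, h'.mul_prod_mul hp.idem hg]
      _ = _ := by simp only [mul_assoc]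
  · have hzero : p t * p s' = 0 := hp.ortho hts
    rw [map_zero]
    calc (0 : A) = p s * (l.map g).prod * (p t * p s') * ((l'.map g).prod * p t') := by
          rw [hzero, mul_zero, zero_mul]
      _ = _ := by simp only [mul_assoc]

theorem sandwich_mul (hp : CompleteOrthogonalIdempotents p)
    (hg : ∀ e, p e.1 * g e * p e.2.1 = g e) {x y} (hx : x ∈ PathAlg k V)
    (hy : y ∈ PathAlg k V) :
    sandwich p g (x * y) = sandwich p g x * sandwich p g y := by
  rw [← Subalgebra.mem_toSubmodule, toSubmodule_eq] at hx hy
  induction hx, hy using Submodule.span_induction₂ with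
  | mem_mem x y hx hy =>
    obtain ⟨s, t, l, -, rfl⟩ := hx
    obtain ⟨s', t', l', h', rfl⟩ := hy
    exact sandwich_pathElt_mul hp hg h'
  | zero_left => simp
  | zero_right => simp
  | add_left x y z _ _ _ hx hy => simp only [add_mul, map_add, hx, hy]
  | add_right x y z _ _ _ hx hy => simp only [mul_add, map_add, hx, hy]
  | smul_left c x y _ _ h => simp only [smul_mul_assoc, map_smul, h]
  | smul_right c x y _ _ h => simp only [mul_smul_comm, map_smul, h]

theorem sandwich_one (hp : CompleteOrthogonalIdempotents p) :
    sandwich p g (1 : Matrix V V (MonoidAlgebra k (FreeMonoid (QArrow V)))) = 1 := by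
  simp [one_eq_sum_pathElt, sandwich_pathElt, (hp.idem _).eq, hp.complete]

def lift (hp : CompleteOrthogonalIdempotents p) (hg : ∀ e, p e.1 * g e * p e.2.1 = g e) :
    PathAlg k V →ₐ[k] A :=
  AlgHom.ofLinearMap (sandwich p g ∘ₗ (PathAlg k V).val.toLinearMap) (sandwich_one hp)
    fun x y => sandwich_mul hp hg x.2 y.2

theorem lift_path (hp : CompleteOrthogonalIdempotents p) (hg : ∀ e, p e.1 * g e * p e.2.1 = g e)
    {s t : V} {l : List (QArrow V)} (h : IsPath s t l) :
    lift hp hg (path k h) = p s * (l.map g).prod * p t :=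
  sandwich_pathElt s t l

theorem lift_vertex (hp : CompleteOrthogonalIdempotents p) (hg : ∀ e, p e.1 * g e * p e.2.1 = g e)
    (v : V) : lift hp hg (vertex k v) = p v := by
  rw [vertex, lift_path, List.map_nil, List.prod_nil, mul_one, (hp.idem v).eq]

theorem lift_arrow (hp : CompleteOrthogonalIdempotents p) (hg : ∀ e, p e.1 * g e * p e.2.1 = g e)
    (e : QArrow V) : lift hp hg (arrow k e) = g e := by
  rw [arrow, lift_path, List.map_singleton, List.prod_singleton, hg]

end Lift

section Bool

variable (k)

theorem vertex_true_mul_arrα : vertex k true * arrow k arrα = arrow k arrα :=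
  vertex_mul_path _

theorem vertex_true_mul_arrβ : vertex k true * arrow k arrβ = 0 :=
  path_mul_path_of_ne _ _ (by decide)

theorem arrα_mul_vertex_true : arrow k arrα * vertex k true = 0 :=
  path_mul_path_of_ne _ _ (by decide)

theorem arrβ_mul_vertex_true : arrow k arrβ * vertex k true = arrow k arrβ :=
  path_mul_vertex _

theorem coe_arrα_mul_arrβ : ((arrow k arrα * arrow k arrβ : PathAlg k Bool) :
    Matrix Bool Bool (MonoidAlgebra k (FreeMonoid (QArrow Bool)))) =
      pathElt k true true [arrα, arrβ] :=
  congrArg Subtype.val (path_mul_path (IsPath.singleton arrα) (IsPath.singleton arrβ))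

end Bool

end PathAlg

open MonoidAlgebra PathAlg

-- The paper sends `ε_0̂ ↦ a`; here paths are concatenated left to right, so the vertex carrying
-- the loop `αβ` is `1̂ = true`, and that is the one sent to `a`.
def bandVertex : Bool → MonoidAlgebra ℤ B5
  | true => of ℤ B5 .a
  | false => 1 - of ℤ B5 .a

def bandArrow (e : QArrow Bool) : MonoidAlgebra ℤ B5 :=
  bif e.1 then of ℤ B5 .ab - of ℤ B5 .a else of ℤ B5 .ba - of ℤ B5 .a

theorem bandArrow_arrα : bandArrow arrα = of ℤ B5 .ab - of ℤ B5 .a := rfl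

theorem bandArrow_arrβ : bandArrow arrβ = of ℤ B5 .ba - of ℤ B5 .a := rfl

theorem bandVertex_complete : CompleteOrthogonalIdempotents bandVertex := by
  have ha : IsIdempotentElem (of ℤ B5 .a) := by rw [IsIdempotentElem, ← map_mul]; rfl
  refine ⟨⟨fun v => ?_, fun v w hvw => ?_⟩, ?_⟩
  · cases v
    exacts [ha.one_sub, ha]
  · cases v <;> cases w
    exacts [absurd rfl hvw, ha.one_sub_mul_self, ha.mul_one_sub_self, absurd rfl hvw]
  · simp [bandVertex]

theorem bandVertex_mul_bandArrow_mul (e : QArrow Bool) :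
    bandVertex e.1 * bandArrow e * bandVertex e.2.1 = bandArrow e := by
  rcases eq_arrα_or_eq_arrβ e with rfl | rfl
  · show of ℤ B5 .a * (of ℤ B5 .ab - of ℤ B5 .a) * (1 - of ℤ B5 .a) = of ℤ B5 .ab - of ℤ B5 .a
    simp only [mul_sub, sub_mul, mul_one, ← map_mul, B5.mul_eq, B5.mul]
    abel
  · show (1 - of ℤ B5 .a) * (of ℤ B5 .ba - of ℤ B5 .a) * of ℤ B5 .a = of ℤ B5 .ba - of ℤ B5 .a
    simp only [mul_sub, sub_mul, one_mul, ← map_mul, B5.mul_eq, B5.mul]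
    abel

def pathToBand : PathAlg ℤ Bool →ₐ[ℤ] MonoidAlgebra ℤ B5 :=
  PathAlg.lift bandVertex_complete bandVertex_mul_bandArrow_mul

theorem pathToBand_vertex (v : Bool) : pathToBand (vertex ℤ v) = bandVertex v :=
  lift_vertex _ _ v

theorem pathToBand_arrow (e : QArrow Bool) : pathToBand (arrow ℤ e) = bandArrow e :=
  lift_arrow _ _ e

theorem pathToBand_arrα_mul_arrβ : pathToBand (arrow ℤ arrα * arrow ℤ arrβ) = 0 := by
  rw [map_mul, pathToBand_arrow, pathToBand_arrow]
  simp only [bandArrow_arrα, bandArrow_arrβ, mul_sub, sub_mul, ← map_mul, B5.mul_eq, B5.mul]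
  abel

abbrev loopIdeal : TwoSidedIdeal (PathAlg ℤ Bool) :=
  TwoSidedIdeal.span {p : PathAlg ℤ Bool | (p : Matrix Bool Bool
      (MonoidAlgebra ℤ (FreeMonoid (QArrow Bool)))) = pathElt ℤ true true [arrα, arrβ]}

local notation "Q" => loopIdeal.ringCon.Quotient

theorem mk_arrα_mul_arrβ : loopIdeal.ringCon.mk' (arrow ℤ arrα * arrow ℤ arrβ) = 0 := by
  rw [← map_zero loopIdeal.ringCon.mk']
  exact loopIdeal.ringCon.eq.mpr (TwoSidedIdeal.subset_span (coe_arrα_mul_arrβ ℤ))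

/-- The images of `a`, `ab` and `ba` in `ℤQ/(αβ)`. -/
def qa : Q := loopIdeal.ringCon.mk' (vertex ℤ true)

def qab : Q := loopIdeal.ringCon.mk' (vertex ℤ true + arrow ℤ arrα)

def qba : Q := loopIdeal.ringCon.mk' (vertex ℤ true + arrow ℤ arrβ)

theorem qa_mul_qa : qa * qa = qa := by
  rw [qa, ← map_mul, vertex_mul_self]

theorem qa_mul_qab : qa * qab = qab := by
  rw [qa, qab, ← map_mul, mul_add, vertex_mul_self, vertex_true_mul_arrα]

theorem qab_mul_qa : qab * qa = qa := by
  rw [qa, qab, ← map_mul, add_mul, vertex_mul_self, arrα_mul_vertex_true, add_zero]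

theorem qa_mul_qba : qa * qba = qa := by
  rw [qa, qba, ← map_mul, mul_add, vertex_mul_self, vertex_true_mul_arrβ, add_zero]

theorem qba_mul_qa : qba * qa = qba := by
  rw [qa, qba, ← map_mul, add_mul, vertex_mul_self, arrβ_mul_vertex_true]

theorem qab_mul_qba : qab * qba = qa := by
  rw [qa, qab, qba, ← map_mul, mul_add, add_mul, add_mul, map_add, map_add, map_add,
    vertex_mul_self, vertex_true_mul_arrβ, arrα_mul_vertex_true, mk_arrα_mul_arrβ]
  simp

def quotToBand : Q →+* MonoidAlgebra ℤ B5 :=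
  loopIdeal.ringCon.lift pathToBand.toRingHom <| TwoSidedIdeal.ringCon_span_le_ker fun x hx => by
    rw [show x = arrow ℤ arrα * arrow ℤ arrβ from Subtype.ext (hx.trans (coe_arrα_mul_arrβ ℤ).symm)]
    exact pathToBand_arrα_mul_arrβ

theorem quotToBand_mk (x : PathAlg ℤ Bool) :
    quotToBand (loopIdeal.ringCon.mk' x) = pathToBand x :=
  rfl

theorem quotToBand_qa : quotToBand qa = of ℤ B5 .a :=
  pathToBand_vertex true

theorem quotToBand_qab : quotToBand qab = of ℤ B5 .ab := by
  rw [qab, quotToBand_mk, map_add, pathToBand_vertex, pathToBand_arrow, bandArrow_arrα]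
  exact add_sub_cancel _ _

theorem quotToBand_qba : quotToBand qba = of ℤ B5 .ba := by
  rw [qba, quotToBand_mk, map_add, pathToBand_vertex, pathToBand_arrow, bandArrow_arrβ]
  exact add_sub_cancel _ _

def qb : Q := qba * qab

theorem qa_mul_qb : qa * qb = qab := by
  rw [qb, ← mul_assoc, qa_mul_qba, qa_mul_qab]

theorem qb_mul_qa : qb * qa = qba := by
  rw [qb, mul_assoc, qab_mul_qa, qba_mul_qa]

theorem qb_mul_qb : qb * qb = qb := by
  rw [qb, mul_assoc, ← mul_assoc qab, qab_mul_qba, ← mul_assoc, qba_mul_qa]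

theorem qa_mul_qb_mul_qa : qa * qb * qa = qa := by
  rw [qa_mul_qb, qab_mul_qa]

theorem qb_mul_qa_mul_qb : qb * qa * qb = qb := by
  rw [← qa_mul_qa, ← mul_assoc, qb_mul_qa, mul_assoc, qa_mul_qb, qb]

def bandToQuot : MonoidAlgebra ℤ B5 →+* Q :=
  (MonoidAlgebra.lift ℤ Q B5
    (B5.lift qa qb qa_mul_qa qb_mul_qb qa_mul_qb_mul_qa qb_mul_qa_mul_qb)).toRingHom

theorem bandToQuot_of (x : B5) : bandToQuot (of ℤ B5 x) =
    B5.lift qa qb qa_mul_qa qb_mul_qb qa_mul_qb_mul_qa qb_mul_qa_mul_qb x :=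
  MonoidAlgebra.lift_of _ x

theorem bandToQuot_a : bandToQuot (of ℤ B5 .a) = qa :=
  bandToQuot_of _

theorem bandToQuot_ab : bandToQuot (of ℤ B5 .ab) = qab :=
  (bandToQuot_of _).trans qa_mul_qb

theorem bandToQuot_ba : bandToQuot (of ℤ B5 .ba) = qba :=
  (bandToQuot_of _).trans qb_mul_qa

theorem quotToBand_comp_bandToQuot : quotToBand.comp bandToQuot = RingHom.id _ := by
  refine MonoidAlgebra.ringHom_ext' (RingHom.ext_int _ _) (B5.monoidHom_ext ?_ ?_)
  · exact (congrArg quotToBand bandToQuot_a).trans quotToBand_qa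
  · refine (congrArg quotToBand (bandToQuot_of .b)).trans ?_
    show quotToBand (qba * qab) = of ℤ B5 .b
    rw [map_mul, quotToBand_qba, quotToBand_qab, ← map_mul]
    rfl

theorem bandToQuot_comp_quotToBand : bandToQuot.comp quotToBand = RingHom.id Q := by
  refine RingCon.Quotient.hom_ext (RingHom.toIntAlgHom_injective (PathAlg.algHom_ext ?_ ?_))
  · intro v
    show bandToQuot (quotToBand (loopIdeal.ringCon.mk' (vertex ℤ v))) =
      loopIdeal.ringCon.mk' (vertex ℤ v)
    rw [quotToBand_mk, pathToBand_vertex]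
    cases v
    · show bandToQuot (1 - of ℤ B5 .a) = _
      rw [map_sub, map_one, bandToQuot_a, qa, ← map_one loopIdeal.ringCon.mk', one_eq_sum_vertex,
        Fintype.sum_bool, map_add, add_sub_cancel_left]
    · exact bandToQuot_a
  · intro e
    show bandToQuot (quotToBand (loopIdeal.ringCon.mk' (arrow ℤ e))) =
      loopIdeal.ringCon.mk' (arrow ℤ e)
    rw [quotToBand_mk, pathToBand_arrow]
    rcases eq_arrα_or_eq_arrβ e with rfl | rfl
    · rw [bandArrow_arrα, map_sub, bandToQuot_ab, bandToQuot_a, qab, qa, map_add,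
        add_sub_cancel_left]
    · rw [bandArrow_arrβ, map_sub, bandToQuot_ba, bandToQuot_a, qba, qa, map_add,
        add_sub_cancel_left]

end

/-- `ℤB ≅ ℤQ/(αβ)`, where `B` is the `5`-element band
`⟨a, b ∣ a² = a, b² = b, aba = a, bab = b⟩ ∪ {1}`, `Q` is the quiver with vertices
`0̂, 1̂` and arrows `α : 1̂ → 0̂`, `β : 0̂ → 1̂`, and `(αβ)` is the two-sided ideal of the
integral path algebra `ℤQ` generated by the length-two loop at `1̂` composed of `α`
followed by `β`. -/
theorem fiveElementBand_integral_presentation :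
    Nonempty (MonoidAlgebra ℤ B5 ≃+*
      (TwoSidedIdeal.ringCon (TwoSidedIdeal.span
        {p : PathAlg ℤ Bool | (p : Matrix Bool Bool
            (MonoidAlgebra ℤ (FreeMonoid (QArrow Bool)))) =
          pathElt ℤ true true [arrα, arrβ]})).Quotient) :=
  ⟨.ofRingHom bandToQuot quotToBand bandToQuot_comp_quotToBand quotToBand_comp_bandToQuot⟩
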